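/- Under the homogeneous DPP difference system with the stated regularity, boundary-condition encodings (H1)–(H2), and energy E(t), the second derivative of the energy satisfies, for every t ∈ [0,T]: E″(t) = 2 ∫_Ω (γ/φ₁(x)) |∂w₁/∂t(x,t)|² dx + 2 ∫_Ω (γ/φ₂(x)) |∂w₂/∂t(x,t)|² dx. -/

import Mathlib

open Set MeasureTheory Matrix

/-- Divergence associated with a (spatial) Jacobian, i.e. the trace of the Fréchet
derivative of a vector field on ℝ³. -/
noncomputable def divOf (J : (Fin 3 → ℝ) →L[ℝ] (Fin 3 → ℝ)) : ℝ :=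
  ∑ j : Fin 3, J (Pi.single j 1) j

/-- The continuous linear map `v ↦ g · v` associated with a gradient vector `g`;
`HasFDerivAt q (gradCLM g) x` says `g` is the spatial gradient of `q` at `x`. -/
noncomputable def gradCLM (g : Fin 3 → ℝ) : (Fin 3 → ℝ) →L[ℝ] ℝ :=
  ∑ j : Fin 3, g j • (ContinuousLinearMap.proj j : (Fin 3 → ℝ) →L[ℝ] ℝ)

/-- The homogeneous double porosity/permeability (DPP) difference system on a bounded open
domain `Ω ⊆ ℝ³` and time interval `[0,T]`, together with all the regularity assumptions and
the boundary-condition encodings (H1)–(H2) described in the paper.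

Fields `w₁, w₂` (velocity differences) and `q₁, q₂` (pressure differences) satisfy
`(γ/φᵢ) ∂wᵢ/∂t + μ Kᵢ⁻¹ wᵢ + ∇qᵢ = 0`, `div w₁ = −(β/μ)(q₁−q₂)`, `div w₂ = +(β/μ)(q₁−q₂)`.
The time derivatives `dwᵢ, dqᵢ`, the spatial gradients `gqᵢ`, and the spatial Jacobians
`Jwᵢ, Jdwᵢ` (whose traces are the divergences of `wᵢ` and of `∂wᵢ/∂t`) are carried as data,
tied to the fields by `HasDerivWithinAt`/`HasFDerivAt` hypotheses. The hypothesis `leibniz`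
expresses that differentiation in `t` under the integral over `Ω` is valid (for continuous
bounded integrands with continuous bounded time derivatives). -/
structure DPP where
  Ω : Set (Fin 3 → ℝ)
  hΩopen : IsOpen Ω
  hΩbdd : Bornology.IsBounded Ω
  T : ℝ
  hT : 0 < T
  γ : ℝ
  μ : ℝ
  β : ℝ
  hγ : 0 < γ
  hμ : 0 < μ
  hβ : 0 < β
  φ₁ : (Fin 3 → ℝ) → ℝ
  φ₂ : (Fin 3 → ℝ) → ℝ
  hφ₁pos : ∀ x ∈ Ω, 0 < φ₁ x
  hφ₂pos : ∀ x ∈ Ω, 0 < φ₂ x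
  hφ₁cont : ContinuousOn φ₁ Ω
  hφ₂cont : ContinuousOn φ₂ Ω
  hφ₁bdd : ∃ c > (0:ℝ), ∃ C : ℝ, ∀ x ∈ Ω, c ≤ φ₁ x ∧ φ₁ x ≤ C
  hφ₂bdd : ∃ c > (0:ℝ), ∃ C : ℝ, ∀ x ∈ Ω, c ≤ φ₂ x ∧ φ₂ x ≤ C
  K₁ : (Fin 3 → ℝ) → Matrix (Fin 3) (Fin 3) ℝ
  K₂ : (Fin 3 → ℝ) → Matrix (Fin 3) (Fin 3) ℝ
  hK₁symm : ∀ x ∈ Ω, (K₁ x).IsSymm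
  hK₂symm : ∀ x ∈ Ω, (K₂ x).IsSymm
  hK₁pd : ∀ x ∈ Ω, (K₁ x).PosDef
  hK₂pd : ∀ x ∈ Ω, (K₂ x).PosDef
  hK₁invcont : ∀ i j, ContinuousOn (fun x => (K₁ x)⁻¹ i j) Ω
  hK₂invcont : ∀ i j, ContinuousOn (fun x => (K₂ x)⁻¹ i j) Ω
  hK₁invbdd : ∃ C : ℝ, ∀ x ∈ Ω, ∀ i j, |(K₁ x)⁻¹ i j| ≤ C
  hK₂invbdd : ∃ C : ℝ, ∀ x ∈ Ω, ∀ i j, |(K₂ x)⁻¹ i j| ≤ C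
  -- the fields of the difference system
  w₁ : (Fin 3 → ℝ) → ℝ → (Fin 3 → ℝ)
  w₂ : (Fin 3 → ℝ) → ℝ → (Fin 3 → ℝ)
  q₁ : (Fin 3 → ℝ) → ℝ → ℝ
  q₂ : (Fin 3 → ℝ) → ℝ → ℝ
  -- derivative data: time derivatives, spatial gradients, spatial Jacobians
  dw₁ : (Fin 3 → ℝ) → ℝ → (Fin 3 → ℝ)
  dw₂ : (Fin 3 → ℝ) → ℝ → (Fin 3 → ℝ)
  dq₁ : (Fin 3 → ℝ) → ℝ → ℝ
  dq₂ : (Fin 3 → ℝ) → ℝ → ℝ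
  gq₁ : (Fin 3 → ℝ) → ℝ → (Fin 3 → ℝ)
  gq₂ : (Fin 3 → ℝ) → ℝ → (Fin 3 → ℝ)
  Jw₁ : (Fin 3 → ℝ) → ℝ → ((Fin 3 → ℝ) →L[ℝ] (Fin 3 → ℝ))
  Jw₂ : (Fin 3 → ℝ) → ℝ → ((Fin 3 → ℝ) →L[ℝ] (Fin 3 → ℝ))
  Jdw₁ : (Fin 3 → ℝ) → ℝ → ((Fin 3 → ℝ) →L[ℝ] (Fin 3 → ℝ))
  Jdw₂ : (Fin 3 → ℝ) → ℝ → ((Fin 3 → ℝ) →L[ℝ] (Fin 3 → ℝ))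
  -- C¹ regularity in time: the data are the actual derivatives
  hdw₁ : ∀ x ∈ Ω, ∀ t ∈ Icc (0:ℝ) T, HasDerivWithinAt (w₁ x) (dw₁ x t) (Icc (0:ℝ) T) t
  hdw₂ : ∀ x ∈ Ω, ∀ t ∈ Icc (0:ℝ) T, HasDerivWithinAt (w₂ x) (dw₂ x t) (Icc (0:ℝ) T) t
  hdq₁ : ∀ x ∈ Ω, ∀ t ∈ Icc (0:ℝ) T, HasDerivWithinAt (q₁ x) (dq₁ x t) (Icc (0:ℝ) T) t
  hdq₂ : ∀ x ∈ Ω, ∀ t ∈ Icc (0:ℝ) T, HasDerivWithinAt (q₂ x) (dq₂ x t) (Icc (0:ℝ) T) t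
  -- C¹ regularity in space: gradients and Jacobians
  hgq₁ : ∀ t ∈ Icc (0:ℝ) T, ∀ x ∈ Ω, HasFDerivAt (fun y => q₁ y t) (gradCLM (gq₁ x t)) x
  hgq₂ : ∀ t ∈ Icc (0:ℝ) T, ∀ x ∈ Ω, HasFDerivAt (fun y => q₂ y t) (gradCLM (gq₂ x t)) x
  hJw₁ : ∀ t ∈ Icc (0:ℝ) T, ∀ x ∈ Ω, HasFDerivAt (fun y => w₁ y t) (Jw₁ x t) x
  hJw₂ : ∀ t ∈ Icc (0:ℝ) T, ∀ x ∈ Ω, HasFDerivAt (fun y => w₂ y t) (Jw₂ x t) x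
  hJdw₁ : ∀ t ∈ Icc (0:ℝ) T, ∀ x ∈ Ω, HasFDerivAt (fun y => dw₁ y t) (Jdw₁ x t) x
  hJdw₂ : ∀ t ∈ Icc (0:ℝ) T, ∀ x ∈ Ω, HasFDerivAt (fun y => dw₂ y t) (Jdw₂ x t) x
  -- `div (∂wᵢ/∂t) = ∂(div wᵢ)/∂t`
  hdivcomm₁ : ∀ x ∈ Ω, ∀ t ∈ Icc (0:ℝ) T,
    HasDerivWithinAt (fun s => divOf (Jw₁ x s)) (divOf (Jdw₁ x t)) (Icc (0:ℝ) T) t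
  hdivcomm₂ : ∀ x ∈ Ω, ∀ t ∈ Icc (0:ℝ) T,
    HasDerivWithinAt (fun s => divOf (Jw₂ x s)) (divOf (Jdw₂ x t)) (Icc (0:ℝ) T) t
  -- joint continuity of the fields and of their appearing first derivatives
  hw₁cont : ContinuousOn (fun p : (Fin 3 → ℝ) × ℝ => w₁ p.1 p.2) (Ω ×ˢ Icc (0:ℝ) T)
  hw₂cont : ContinuousOn (fun p : (Fin 3 → ℝ) × ℝ => w₂ p.1 p.2) (Ω ×ˢ Icc (0:ℝ) T)
  hq₁cont : ContinuousOn (fun p : (Fin 3 → ℝ) × ℝ => q₁ p.1 p.2) (Ω ×ˢ Icc (0:ℝ) T)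
  hq₂cont : ContinuousOn (fun p : (Fin 3 → ℝ) × ℝ => q₂ p.1 p.2) (Ω ×ˢ Icc (0:ℝ) T)
  hdw₁cont : ContinuousOn (fun p : (Fin 3 → ℝ) × ℝ => dw₁ p.1 p.2) (Ω ×ˢ Icc (0:ℝ) T)
  hdw₂cont : ContinuousOn (fun p : (Fin 3 → ℝ) × ℝ => dw₂ p.1 p.2) (Ω ×ˢ Icc (0:ℝ) T)
  hdq₁cont : ContinuousOn (fun p : (Fin 3 → ℝ) × ℝ => dq₁ p.1 p.2) (Ω ×ˢ Icc (0:ℝ) T)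
  hdq₂cont : ContinuousOn (fun p : (Fin 3 → ℝ) × ℝ => dq₂ p.1 p.2) (Ω ×ˢ Icc (0:ℝ) T)
  hgq₁cont : ContinuousOn (fun p : (Fin 3 → ℝ) × ℝ => gq₁ p.1 p.2) (Ω ×ˢ Icc (0:ℝ) T)
  hgq₂cont : ContinuousOn (fun p : (Fin 3 → ℝ) × ℝ => gq₂ p.1 p.2) (Ω ×ˢ Icc (0:ℝ) T)
  hdivw₁cont : ContinuousOn (fun p : (Fin 3 → ℝ) × ℝ => divOf (Jw₁ p.1 p.2)) (Ω ×ˢ Icc (0:ℝ) T)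
  hdivw₂cont : ContinuousOn (fun p : (Fin 3 → ℝ) × ℝ => divOf (Jw₂ p.1 p.2)) (Ω ×ˢ Icc (0:ℝ) T)
  hdivdw₁cont : ContinuousOn (fun p : (Fin 3 → ℝ) × ℝ => divOf (Jdw₁ p.1 p.2)) (Ω ×ˢ Icc (0:ℝ) T)
  hdivdw₂cont : ContinuousOn (fun p : (Fin 3 → ℝ) × ℝ => divOf (Jdw₂ p.1 p.2)) (Ω ×ˢ Icc (0:ℝ) T)
  -- boundedness of the fields and of their appearing first derivatives
  hw₁bdd : ∃ C : ℝ, ∀ x ∈ Ω, ∀ t ∈ Icc (0:ℝ) T, ‖w₁ x t‖ ≤ C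
  hw₂bdd : ∃ C : ℝ, ∀ x ∈ Ω, ∀ t ∈ Icc (0:ℝ) T, ‖w₂ x t‖ ≤ C
  hq₁bdd : ∃ C : ℝ, ∀ x ∈ Ω, ∀ t ∈ Icc (0:ℝ) T, |q₁ x t| ≤ C
  hq₂bdd : ∃ C : ℝ, ∀ x ∈ Ω, ∀ t ∈ Icc (0:ℝ) T, |q₂ x t| ≤ C
  hdw₁bdd : ∃ C : ℝ, ∀ x ∈ Ω, ∀ t ∈ Icc (0:ℝ) T, ‖dw₁ x t‖ ≤ C
  hdw₂bdd : ∃ C : ℝ, ∀ x ∈ Ω, ∀ t ∈ Icc (0:ℝ) T, ‖dw₂ x t‖ ≤ C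
  hdq₁bdd : ∃ C : ℝ, ∀ x ∈ Ω, ∀ t ∈ Icc (0:ℝ) T, |dq₁ x t| ≤ C
  hdq₂bdd : ∃ C : ℝ, ∀ x ∈ Ω, ∀ t ∈ Icc (0:ℝ) T, |dq₂ x t| ≤ C
  hgq₁bdd : ∃ C : ℝ, ∀ x ∈ Ω, ∀ t ∈ Icc (0:ℝ) T, ‖gq₁ x t‖ ≤ C
  hgq₂bdd : ∃ C : ℝ, ∀ x ∈ Ω, ∀ t ∈ Icc (0:ℝ) T, ‖gq₂ x t‖ ≤ C
  hdivw₁bdd : ∃ C : ℝ, ∀ x ∈ Ω, ∀ t ∈ Icc (0:ℝ) T, |divOf (Jw₁ x t)| ≤ C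
  hdivw₂bdd : ∃ C : ℝ, ∀ x ∈ Ω, ∀ t ∈ Icc (0:ℝ) T, |divOf (Jw₂ x t)| ≤ C
  hdivdw₁bdd : ∃ C : ℝ, ∀ x ∈ Ω, ∀ t ∈ Icc (0:ℝ) T, |divOf (Jdw₁ x t)| ≤ C
  hdivdw₂bdd : ∃ C : ℝ, ∀ x ∈ Ω, ∀ t ∈ Icc (0:ℝ) T, |divOf (Jdw₂ x t)| ≤ C
  -- the homogeneous DPP difference system
  pde₁ : ∀ x ∈ Ω, ∀ t ∈ Icc (0:ℝ) T,
    (γ / φ₁ x) • dw₁ x t + μ • ((K₁ x)⁻¹ *ᵥ w₁ x t) + gq₁ x t = 0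
  pde₂ : ∀ x ∈ Ω, ∀ t ∈ Icc (0:ℝ) T,
    (γ / φ₂ x) • dw₂ x t + μ • ((K₂ x)⁻¹ *ᵥ w₂ x t) + gq₂ x t = 0
  mass₁ : ∀ x ∈ Ω, ∀ t ∈ Icc (0:ℝ) T, divOf (Jw₁ x t) = -(β / μ) * (q₁ x t - q₂ x t)
  mass₂ : ∀ x ∈ Ω, ∀ t ∈ Icc (0:ℝ) T, divOf (Jw₂ x t) = (β / μ) * (q₁ x t - q₂ x t)
  -- boundary-condition encodings (H1)–(H2)
  H1₁ : ∀ t ∈ Icc (0:ℝ) T,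
    (∫ x in Ω, (w₁ x t ⬝ᵥ gq₁ x t + q₁ x t * divOf (Jw₁ x t))) = 0
  H1₂ : ∀ t ∈ Icc (0:ℝ) T,
    (∫ x in Ω, (w₂ x t ⬝ᵥ gq₂ x t + q₂ x t * divOf (Jw₂ x t))) = 0
  H2₁ : ∀ t ∈ Icc (0:ℝ) T,
    (∫ x in Ω, (dw₁ x t ⬝ᵥ gq₁ x t + q₁ x t * divOf (Jdw₁ x t))) = 0
  H2₂ : ∀ t ∈ Icc (0:ℝ) T,
    (∫ x in Ω, (dw₂ x t ⬝ᵥ gq₂ x t + q₂ x t * divOf (Jdw₂ x t))) = 0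
  -- differentiation in `t` under the integral over `Ω` is valid
  leibniz : ∀ F F' : (Fin 3 → ℝ) → ℝ → ℝ,
    (∀ x ∈ Ω, ∀ t ∈ Icc (0:ℝ) T, HasDerivWithinAt (F x) (F' x t) (Icc (0:ℝ) T) t) →
    ContinuousOn (fun p : (Fin 3 → ℝ) × ℝ => F p.1 p.2) (Ω ×ˢ Icc (0:ℝ) T) →
    ContinuousOn (fun p : (Fin 3 → ℝ) × ℝ => F' p.1 p.2) (Ω ×ˢ Icc (0:ℝ) T) →
    (∃ C : ℝ, ∀ x ∈ Ω, ∀ t ∈ Icc (0:ℝ) T, |F x t| ≤ C) →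
    (∃ C : ℝ, ∀ x ∈ Ω, ∀ t ∈ Icc (0:ℝ) T, |F' x t| ≤ C) →
    ∀ t ∈ Icc (0:ℝ) T,
      HasDerivWithinAt (fun s => ∫ x in Ω, F x s) (∫ x in Ω, F' x t) (Icc (0:ℝ) T) t

/-- The (kinetic) energy `E(t) = ∫_Ω [ γ/(2φ₁) |w₁|² + γ/(2φ₂) |w₂|² ] dx` of the
difference system. -/
noncomputable def DPP.E (S : DPP) : ℝ → ℝ := fun t =>
  ∫ x in S.Ω, ((S.γ / (2 * S.φ₁ x)) * (S.w₁ x t ⬝ᵥ S.w₁ x t)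
    + (S.γ / (2 * S.φ₂ x)) * (S.w₂ x t ⬝ᵥ S.w₂ x t))

/-!
Testing the momentum equations against `wᵢ` and using the mass balance and (H1) gives
`E' = -∫_Ω D`, where `D = μ K₁⁻¹w₁·w₁ + μ K₂⁻¹w₂·w₂ + (β/μ)(q₁ - q₂)²` is the dissipation.
By the symmetry of `Kᵢ⁻¹`, `∂ₜD = 2 (μ K₁⁻¹w₁·∂ₜw₁ + μ K₂⁻¹w₂·∂ₜw₂ + (β/μ)(q₁ - q₂) ∂ₜ(q₁ - q₂))`;
testing the momentum equations against `∂ₜwᵢ` and using the time-differentiated mass balance and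
(H2) turns `-∫_Ω ∂ₜD` into `2 ∫_Ω (γ/φ₁)|∂ₜw₁|² + 2 ∫_Ω (γ/φ₂)|∂ₜw₂|²`. Differentiation under the
integral is licensed because every integrand involved is bounded and continuous on `Ω × [0,T]`.
-/

def BoundedContinuousOn {α E : Type*} [TopologicalSpace α] [SeminormedAddCommGroup E]
    (f : α → E) (s : Set α) : Prop :=
  ContinuousOn f s ∧ ∃ C, ∀ p ∈ s, ‖f p‖ ≤ C

namespace BoundedContinuousOn

variable {α β E R : Type*} [TopologicalSpace α] [SeminormedAddCommGroup E] {s : Set α}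

theorem const (c : E) : BoundedContinuousOn (fun _ => c) s :=
  ⟨continuousOn_const, ‖c‖, fun _ _ => le_rfl⟩

theorem add {f g : α → E} (hf : BoundedContinuousOn f s) (hg : BoundedContinuousOn g s) :
    BoundedContinuousOn (fun p => f p + g p) s := by
  obtain ⟨hfc, Cf, hCf⟩ := hf
  obtain ⟨hgc, Cg, hCg⟩ := hg
  exact ⟨hfc.add hgc, Cf + Cg, fun p hp =>
    (norm_add_le _ _).trans (add_le_add (hCf p hp) (hCg p hp))⟩

theorem neg {f : α → E} (hf : BoundedContinuousOn f s) :
    BoundedContinuousOn (fun p => -f p) s := by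
  obtain ⟨hfc, C, hC⟩ := hf
  exact ⟨hfc.neg, C, fun p hp => (norm_neg (f p)).trans_le (hC p hp)⟩

theorem sub {f g : α → E} (hf : BoundedContinuousOn f s) (hg : BoundedContinuousOn g s) :
    BoundedContinuousOn (fun p => f p - g p) s := by
  simpa only [sub_eq_add_neg] using hf.add hg.neg

theorem sum {ι : Type*} (t : Finset ι) {f : ι → α → E}
    (hf : ∀ i ∈ t, BoundedContinuousOn (f i) s) :
    BoundedContinuousOn (fun p => ∑ i ∈ t, f i p) s := by
  classical
  induction t using Finset.induction_on with
  | empty => simpa using const (0 : E)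
  | insert i t hi ih =>
    simp only [Finset.sum_insert hi]
    exact (hf i (t.mem_insert_self i)).add (ih fun j hj => hf j (Finset.mem_insert_of_mem hj))

theorem mul [NonUnitalSeminormedRing R] {f g : α → R} (hf : BoundedContinuousOn f s)
    (hg : BoundedContinuousOn g s) : BoundedContinuousOn (fun p => f p * g p) s := by
  obtain ⟨hfc, Cf, hCf⟩ := hf
  obtain ⟨hgc, Cg, hCg⟩ := hg
  refine ⟨hfc.mul hgc, Cf * Cg, fun p hp => (norm_mul_le _ _).trans ?_⟩
  exact mul_le_mul (hCf p hp) (hCg p hp) (norm_nonneg _) ((norm_nonneg _).trans (hCf p hp))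

theorem pi_iff {ι : Type*} [Fintype ι] {f : α → ι → E} :
    BoundedContinuousOn f s ↔ ∀ i, BoundedContinuousOn (fun p => f p i) s := by
  refine ⟨fun ⟨hc, C, hC⟩ i => ⟨continuousOn_pi.1 hc i, C, fun p hp =>
    (norm_le_pi_norm (f p) i).trans (hC p hp)⟩, fun h => ⟨continuousOn_pi.2 fun i => (h i).1, ?_⟩⟩
  choose C hC using fun i => (h i).2
  refine ⟨∑ i, max (C i) 0, fun p hp => (pi_norm_le_iff_of_nonneg ?_).2 fun i => ?_⟩
  · exact Finset.sum_nonneg fun i _ => le_max_right _ _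
  · exact (hC i p hp).trans ((le_max_left _ _).trans
      (Finset.single_le_sum (fun j _ => le_max_right (C j) 0) (Finset.mem_univ i)))

theorem dotProduct [SeminormedCommRing R] {ι : Type*} [Fintype ι] {f g : α → ι → R}
    (hf : BoundedContinuousOn f s) (hg : BoundedContinuousOn g s) :
    BoundedContinuousOn (fun p => f p ⬝ᵥ g p) s :=
  sum _ fun i _ => (pi_iff.1 hf i).mul (pi_iff.1 hg i)

theorem mulVec [SeminormedCommRing R] {ι : Type*} [Fintype ι] {M : α → Matrix ι ι R}
    {v : α → ι → R} (hM : ∀ i j, BoundedContinuousOn (fun p => M p i j) s)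
    (hv : BoundedContinuousOn v s) : BoundedContinuousOn (fun p => M p *ᵥ v p) s :=
  pi_iff.2 fun i => (pi_iff.2 (hM i)).dotProduct hv

theorem comp_fst {f : α → E} (hf : BoundedContinuousOn f s) [TopologicalSpace β] (t : Set β) :
    BoundedContinuousOn (fun p : α × β => f p.1) (s ×ˢ t) := by
  obtain ⟨hc, C, hC⟩ := hf
  exact ⟨hc.comp continuousOn_fst fun p hp => hp.1, C, fun p hp => hC p.1 hp.1⟩

theorem uncurry [TopologicalSpace β] {t : Set β} {F : α → β → E}
    (hc : ContinuousOn (fun p : α × β => F p.1 p.2) (s ×ˢ t))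
    (hb : ∃ C, ∀ x ∈ s, ∀ y ∈ t, ‖F x y‖ ≤ C) :
    BoundedContinuousOn (fun p : α × β => F p.1 p.2) (s ×ˢ t) := by
  obtain ⟨C, hC⟩ := hb
  exact ⟨hc, C, fun p hp => hC p.1 hp.1 p.2 hp.2⟩

theorem bound_uncurry [TopologicalSpace β] {t : Set β} {F : α → β → E}
    (h : BoundedContinuousOn (fun p : α × β => F p.1 p.2) (s ×ˢ t)) :
    ∃ C, ∀ x ∈ s, ∀ y ∈ t, ‖F x y‖ ≤ C := by
  obtain ⟨-, C, hC⟩ := h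
  exact ⟨C, fun x hx y hy => hC (x, y) ⟨hx, hy⟩⟩

theorem slice [TopologicalSpace β] {t : Set β} {F : α → β → E}
    (h : BoundedContinuousOn (fun p : α × β => F p.1 p.2) (s ×ˢ t)) {y : β} (hy : y ∈ t) :
    BoundedContinuousOn (fun x => F x y) s := by
  obtain ⟨hc, C, hC⟩ := h
  exact ⟨hc.comp (continuousOn_id.prodMk continuousOn_const) fun x hx => ⟨hx, hy⟩,
    C, fun x hx => hC (x, y) ⟨hx, hy⟩⟩

theorem integrableOn {G : Type*} [NormedAddCommGroup G] [MeasurableSpace α]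
    [OpensMeasurableSpace α] [SecondCountableTopologyEither α G] {μ : Measure α} {f : α → G}
    (hf : BoundedContinuousOn f s) (hs : MeasurableSet s) (hμ : μ s ≠ ⊤) :
    IntegrableOn f s μ := by
  obtain ⟨hc, C, hC⟩ := hf
  refine Integrable.mono' (integrableOn_const hμ) (hc.aestronglyMeasurable hs) ?_
  filter_upwards [ae_restrict_mem hs] with p hp using hC p hp

end BoundedContinuousOn

theorem boundedContinuousOn_const_div {α : Type*} [TopologicalSpace α] {s : Set α}
    {f : α → ℝ} (hf : ContinuousOn f s) {c : ℝ} (hc : 0 < c) (hcf : ∀ p ∈ s, c ≤ f p) (a : ℝ) :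
    BoundedContinuousOn (fun p => a / f p) s := by
  refine ⟨continuousOn_const.div hf fun p hp => (hc.trans_le (hcf p hp)).ne', |a| / c,
    fun p hp => ?_⟩
  rw [norm_div, Real.norm_eq_abs, Real.norm_eq_abs, abs_of_pos (hc.trans_le (hcf p hp))]
  exact div_le_div_of_nonneg_left (abs_nonneg a) hc (hcf p hp)

section Derivatives

variable {𝕜 : Type*} [NontriviallyNormedField 𝕜] {ι : Type*} [Fintype ι] {s : Set 𝕜} {t : 𝕜}

theorem HasDerivWithinAt.dotProduct {u v : 𝕜 → ι → 𝕜} {u' v' : ι → 𝕜}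
    (hu : HasDerivWithinAt u u' s t) (hv : HasDerivWithinAt v v' s t) :
    HasDerivWithinAt (fun r => u r ⬝ᵥ v r) (u' ⬝ᵥ v t + u t ⬝ᵥ v') s t := by
  have := HasDerivWithinAt.fun_sum (u := Finset.univ) fun i _ =>
    (hasDerivWithinAt_pi.1 hu i).fun_mul (hasDerivWithinAt_pi.1 hv i)
  simpa only [_root_.dotProduct, Finset.sum_add_distrib] using this

theorem HasDerivWithinAt.mulVec (M : Matrix ι ι 𝕜) {v : 𝕜 → ι → 𝕜} {v' : ι → 𝕜}
    (hv : HasDerivWithinAt v v' s t) : HasDerivWithinAt (fun r => M *ᵥ v r) (M *ᵥ v') s t :=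
  hasDerivWithinAt_pi.2 fun i =>
    ((hasDerivWithinAt_const t s (M i)).dotProduct hv).congr_deriv (by
      rw [zero_dotProduct, zero_add]; rfl)

theorem HasDerivWithinAt.dotProduct_self {v : 𝕜 → ι → 𝕜} {v' : ι → 𝕜}
    (hv : HasDerivWithinAt v v' s t) :
    HasDerivWithinAt (fun r => v r ⬝ᵥ v r) (2 * (v t ⬝ᵥ v')) s t :=
  (hv.dotProduct hv).congr_deriv (by rw [dotProduct_comm v']; ring)

theorem HasDerivWithinAt.dotProduct_mulVec_self {M : Matrix ι ι 𝕜} (hM : M.IsSymm)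
    {v : 𝕜 → ι → 𝕜} {v' : ι → 𝕜} (hv : HasDerivWithinAt v v' s t) :
    HasDerivWithinAt (fun r => v r ⬝ᵥ (M *ᵥ v r)) (2 * (v' ⬝ᵥ (M *ᵥ v t))) s t :=
  (hv.dotProduct (hv.mulVec M)).congr_deriv (by
    rw [← hM.eq, dotProduct_transpose_mulVec, hM.eq]; ring)

end Derivatives

theorem dotProduct_eq_zero_of_smul_add_smul_add_eq_zero {ι R : Type*} [Fintype ι] [CommRing R]
    {a b : R} {u u' u'' : ι → R} (h : a • u + b • u' + u'' = 0) (v : ι → R) :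
    a * (v ⬝ᵥ u) + b * (v ⬝ᵥ u') + v ⬝ᵥ u'' = 0 := by
  simpa only [dotProduct_add, dotProduct_smul, smul_eq_mul, dotProduct_zero] using
    congrArg (v ⬝ᵥ ·) h

namespace DPP

variable (S : DPP)

abbrev spaceTime : Set ((Fin 3 → ℝ) × ℝ) := S.Ω ×ˢ Icc (0:ℝ) S.T

noncomputable def energyDensity (x : Fin 3 → ℝ) (t : ℝ) : ℝ :=
  S.γ / (2 * S.φ₁ x) * (S.w₁ x t ⬝ᵥ S.w₁ x t) + S.γ / (2 * S.φ₂ x) * (S.w₂ x t ⬝ᵥ S.w₂ x t)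

noncomputable def energyDensityDeriv (x : Fin 3 → ℝ) (t : ℝ) : ℝ :=
  S.γ / S.φ₁ x * (S.w₁ x t ⬝ᵥ S.dw₁ x t) + S.γ / S.φ₂ x * (S.w₂ x t ⬝ᵥ S.dw₂ x t)

noncomputable def dissipation (x : Fin 3 → ℝ) (t : ℝ) : ℝ :=
  S.μ * (S.w₁ x t ⬝ᵥ ((S.K₁ x)⁻¹ *ᵥ S.w₁ x t)) + S.μ * (S.w₂ x t ⬝ᵥ ((S.K₂ x)⁻¹ *ᵥ S.w₂ x t))
    + S.β / S.μ * (S.q₁ x t - S.q₂ x t) ^ 2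

noncomputable def dissipationDeriv (x : Fin 3 → ℝ) (t : ℝ) : ℝ :=
  2 * (S.μ * (S.dw₁ x t ⬝ᵥ ((S.K₁ x)⁻¹ *ᵥ S.w₁ x t))
    + S.μ * (S.dw₂ x t ⬝ᵥ ((S.K₂ x)⁻¹ *ᵥ S.w₂ x t))
    + S.β / S.μ * ((S.q₁ x t - S.q₂ x t) * (S.dq₁ x t - S.dq₂ x t)))

theorem uniqueDiffOn : UniqueDiffOn ℝ (Icc (0:ℝ) S.T) :=
  uniqueDiffOn_Icc S.hT

theorem boundedContinuousOn_div_φ₁ (a : ℝ) :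
    BoundedContinuousOn (fun x => a / S.φ₁ x) S.Ω := by
  obtain ⟨c, hc, _, hcφ⟩ := S.hφ₁bdd
  exact boundedContinuousOn_const_div S.hφ₁cont hc (fun x hx => (hcφ x hx).1) a

theorem boundedContinuousOn_div_φ₂ (a : ℝ) :
    BoundedContinuousOn (fun x => a / S.φ₂ x) S.Ω := by
  obtain ⟨c, hc, _, hcφ⟩ := S.hφ₂bdd
  exact boundedContinuousOn_const_div S.hφ₂cont hc (fun x hx => (hcφ x hx).1) a

theorem boundedContinuousOn_K₁_inv (i j : Fin 3) :
    BoundedContinuousOn (fun x => (S.K₁ x)⁻¹ i j) S.Ω := by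
  obtain ⟨C, hC⟩ := S.hK₁invbdd
  exact ⟨S.hK₁invcont i j, C, fun x hx => hC x hx i j⟩

theorem boundedContinuousOn_K₂_inv (i j : Fin 3) :
    BoundedContinuousOn (fun x => (S.K₂ x)⁻¹ i j) S.Ω := by
  obtain ⟨C, hC⟩ := S.hK₂invbdd
  exact ⟨S.hK₂invcont i j, C, fun x hx => hC x hx i j⟩

theorem boundedContinuousOn_energyDensity :
    BoundedContinuousOn (fun p => S.energyDensity p.1 p.2) S.spaceTime := by
  have hw₁ := BoundedContinuousOn.uncurry S.hw₁cont S.hw₁bdd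
  have hw₂ := BoundedContinuousOn.uncurry S.hw₂cont S.hw₂bdd
  have hφ₁ : BoundedContinuousOn (fun p => S.γ / (2 * S.φ₁ p.1)) S.spaceTime := by
    simpa only [div_div] using (S.boundedContinuousOn_div_φ₁ (S.γ / 2)).comp_fst _
  have hφ₂ : BoundedContinuousOn (fun p => S.γ / (2 * S.φ₂ p.1)) S.spaceTime := by
    simpa only [div_div] using (S.boundedContinuousOn_div_φ₂ (S.γ / 2)).comp_fst _
  exact (hφ₁.mul (hw₁.dotProduct hw₁)).add (hφ₂.mul (hw₂.dotProduct hw₂))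

theorem boundedContinuousOn_energyDensityDeriv :
    BoundedContinuousOn (fun p => S.energyDensityDeriv p.1 p.2) S.spaceTime := by
  have hw₁ := BoundedContinuousOn.uncurry S.hw₁cont S.hw₁bdd
  have hw₂ := BoundedContinuousOn.uncurry S.hw₂cont S.hw₂bdd
  have hdw₁ := BoundedContinuousOn.uncurry S.hdw₁cont S.hdw₁bdd
  have hdw₂ := BoundedContinuousOn.uncurry S.hdw₂cont S.hdw₂bdd
  exact (((S.boundedContinuousOn_div_φ₁ S.γ).comp_fst _).mul (hw₁.dotProduct hdw₁)).add
    (((S.boundedContinuousOn_div_φ₂ S.γ).comp_fst _).mul (hw₂.dotProduct hdw₂))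

theorem boundedContinuousOn_dissipation :
    BoundedContinuousOn (fun p => S.dissipation p.1 p.2) S.spaceTime := by
  have hw₁ := BoundedContinuousOn.uncurry S.hw₁cont S.hw₁bdd
  have hw₂ := BoundedContinuousOn.uncurry S.hw₂cont S.hw₂bdd
  have hq := (BoundedContinuousOn.uncurry S.hq₁cont S.hq₁bdd).sub
    (BoundedContinuousOn.uncurry S.hq₂cont S.hq₂bdd)
  have hK₁w₁ := BoundedContinuousOn.mulVec
    (fun i j => (S.boundedContinuousOn_K₁_inv i j).comp_fst (Icc (0:ℝ) S.T)) hw₁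
  have hK₂w₂ := BoundedContinuousOn.mulVec
    (fun i j => (S.boundedContinuousOn_K₂_inv i j).comp_fst (Icc (0:ℝ) S.T)) hw₂
  have hμ := BoundedContinuousOn.const (s := S.spaceTime) S.μ
  simpa only [dissipation, sq] using
    ((hμ.mul (hw₁.dotProduct hK₁w₁)).add (hμ.mul (hw₂.dotProduct hK₂w₂))).add
      ((BoundedContinuousOn.const (S.β / S.μ)).mul (hq.mul hq))

theorem boundedContinuousOn_dissipationDeriv :
    BoundedContinuousOn (fun p => S.dissipationDeriv p.1 p.2) S.spaceTime := by
  have hw₁ := BoundedContinuousOn.uncurry S.hw₁cont S.hw₁bdd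
  have hw₂ := BoundedContinuousOn.uncurry S.hw₂cont S.hw₂bdd
  have hdw₁ := BoundedContinuousOn.uncurry S.hdw₁cont S.hdw₁bdd
  have hdw₂ := BoundedContinuousOn.uncurry S.hdw₂cont S.hdw₂bdd
  have hq := (BoundedContinuousOn.uncurry S.hq₁cont S.hq₁bdd).sub
    (BoundedContinuousOn.uncurry S.hq₂cont S.hq₂bdd)
  have hdq := (BoundedContinuousOn.uncurry S.hdq₁cont S.hdq₁bdd).sub
    (BoundedContinuousOn.uncurry S.hdq₂cont S.hdq₂bdd)
  have hK₁w₁ := BoundedContinuousOn.mulVec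
    (fun i j => (S.boundedContinuousOn_K₁_inv i j).comp_fst (Icc (0:ℝ) S.T)) hw₁
  have hK₂w₂ := BoundedContinuousOn.mulVec
    (fun i j => (S.boundedContinuousOn_K₂_inv i j).comp_fst (Icc (0:ℝ) S.T)) hw₂
  have hμ := BoundedContinuousOn.const (s := S.spaceTime) S.μ
  exact (BoundedContinuousOn.const 2).mul
    (((hμ.mul (hdw₁.dotProduct hK₁w₁)).add (hμ.mul (hdw₂.dotProduct hK₂w₂))).add
      ((BoundedContinuousOn.const (S.β / S.μ)).mul (hq.mul hdq)))

theorem hasDerivWithinAt_integral {F F' : (Fin 3 → ℝ) → ℝ → ℝ}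
    (hF : BoundedContinuousOn (fun p => F p.1 p.2) S.spaceTime)
    (hF' : BoundedContinuousOn (fun p => F' p.1 p.2) S.spaceTime)
    (hderiv : ∀ x ∈ S.Ω, ∀ t ∈ Icc (0:ℝ) S.T,
      HasDerivWithinAt (F x) (F' x t) (Icc (0:ℝ) S.T) t)
    {t : ℝ} (ht : t ∈ Icc (0:ℝ) S.T) :
    HasDerivWithinAt (fun s => ∫ x in S.Ω, F x s) (∫ x in S.Ω, F' x t) (Icc (0:ℝ) S.T) t :=
  S.leibniz F F' hderiv hF.1 hF'.1 hF.bound_uncurry hF'.bound_uncurry t ht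

theorem integrableOn_slice {F : (Fin 3 → ℝ) → ℝ → ℝ}
    (hF : BoundedContinuousOn (fun p => F p.1 p.2) S.spaceTime) {t : ℝ}
    (ht : t ∈ Icc (0:ℝ) S.T) : IntegrableOn (fun x => F x t) S.Ω :=
  (hF.slice ht).integrableOn S.hΩopen.measurableSet S.hΩbdd.measure_lt_top.ne

variable {S}

theorem hasDerivWithinAt_energyDensity {x : Fin 3 → ℝ} (hx : x ∈ S.Ω) {t : ℝ}
    (ht : t ∈ Icc (0:ℝ) S.T) :
    HasDerivWithinAt (S.energyDensity x) (S.energyDensityDeriv x t) (Icc (0:ℝ) S.T) t := by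
  have h₁ := (S.hdw₁ x hx t ht).dotProduct_self.const_mul (S.γ / (2 * S.φ₁ x))
  have h₂ := (S.hdw₂ x hx t ht).dotProduct_self.const_mul (S.γ / (2 * S.φ₂ x))
  exact (h₁.add h₂).congr_deriv (by rw [energyDensityDeriv]; ring)

theorem hasDerivWithinAt_dissipation {x : Fin 3 → ℝ} (hx : x ∈ S.Ω) {t : ℝ}
    (ht : t ∈ Icc (0:ℝ) S.T) :
    HasDerivWithinAt (S.dissipation x) (S.dissipationDeriv x t) (Icc (0:ℝ) S.T) t := by
  have h₁ := ((S.hdw₁ x hx t ht).dotProduct_mulVec_self (S.hK₁symm x hx).inv).const_mul S.μ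
  have h₂ := ((S.hdw₂ x hx t ht).dotProduct_mulVec_self (S.hK₂symm x hx).inv).const_mul S.μ
  have h₃ := (((S.hdq₁ x hx t ht).sub (S.hdq₂ x hx t ht)).pow 2).const_mul (S.β / S.μ)
  exact ((h₁.add h₂).add h₃).congr_deriv (by rw [dissipationDeriv, Pi.sub_apply]; ring)

theorem divOf_Jdw₁ {x : Fin 3 → ℝ} (hx : x ∈ S.Ω) {t : ℝ} (ht : t ∈ Icc (0:ℝ) S.T) :
    divOf (S.Jdw₁ x t) = -(S.β / S.μ) * (S.dq₁ x t - S.dq₂ x t) :=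
  (S.uniqueDiffOn t ht).eq_deriv _ (S.hdivcomm₁ x hx t ht)
    ((((S.hdq₁ x hx t ht).sub (S.hdq₂ x hx t ht)).const_mul _).congr_of_mem
      (fun s hs => S.mass₁ x hx s hs) ht)

theorem divOf_Jdw₂ {x : Fin 3 → ℝ} (hx : x ∈ S.Ω) {t : ℝ} (ht : t ∈ Icc (0:ℝ) S.T) :
    divOf (S.Jdw₂ x t) = S.β / S.μ * (S.dq₁ x t - S.dq₂ x t) :=
  (S.uniqueDiffOn t ht).eq_deriv _ (S.hdivcomm₂ x hx t ht)
    ((((S.hdq₁ x hx t ht).sub (S.hdq₂ x hx t ht)).const_mul _).congr_of_mem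
      (fun s hs => S.mass₂ x hx s hs) ht)

theorem energyDensityDeriv_eq {x : Fin 3 → ℝ} (hx : x ∈ S.Ω) {t : ℝ}
    (ht : t ∈ Icc (0:ℝ) S.T) :
    S.energyDensityDeriv x t = -(S.dissipation x t
      + (S.w₁ x t ⬝ᵥ S.gq₁ x t + S.q₁ x t * divOf (S.Jw₁ x t))
      + (S.w₂ x t ⬝ᵥ S.gq₂ x t + S.q₂ x t * divOf (S.Jw₂ x t))) := by
  have h₁ := dotProduct_eq_zero_of_smul_add_smul_add_eq_zero (S.pde₁ x hx t ht) (S.w₁ x t)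
  have h₂ := dotProduct_eq_zero_of_smul_add_smul_add_eq_zero (S.pde₂ x hx t ht) (S.w₂ x t)
  rw [energyDensityDeriv, dissipation, S.mass₁ x hx t ht, S.mass₂ x hx t ht]
  linear_combination h₁ + h₂

theorem dissipationDeriv_eq {x : Fin 3 → ℝ} (hx : x ∈ S.Ω) {t : ℝ}
    (ht : t ∈ Icc (0:ℝ) S.T) :
    S.dissipationDeriv x t = -2 * (S.γ / S.φ₁ x * (S.dw₁ x t ⬝ᵥ S.dw₁ x t)
      + S.γ / S.φ₂ x * (S.dw₂ x t ⬝ᵥ S.dw₂ x t)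
      + (S.dw₁ x t ⬝ᵥ S.gq₁ x t + S.q₁ x t * divOf (S.Jdw₁ x t))
      + (S.dw₂ x t ⬝ᵥ S.gq₂ x t + S.q₂ x t * divOf (S.Jdw₂ x t))) := by
  have h₁ := dotProduct_eq_zero_of_smul_add_smul_add_eq_zero (S.pde₁ x hx t ht) (S.dw₁ x t)
  have h₂ := dotProduct_eq_zero_of_smul_add_smul_add_eq_zero (S.pde₂ x hx t ht) (S.dw₂ x t)
  rw [dissipationDeriv, divOf_Jdw₁ hx ht, divOf_Jdw₂ hx ht]
  linear_combination 2 * h₁ + 2 * h₂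

theorem integral_energyDensityDeriv {t : ℝ} (ht : t ∈ Icc (0:ℝ) S.T) :
    ∫ x in S.Ω, S.energyDensityDeriv x t = -∫ x in S.Ω, S.dissipation x t := by
  have hw₁ := BoundedContinuousOn.uncurry S.hw₁cont S.hw₁bdd
  have hw₂ := BoundedContinuousOn.uncurry S.hw₂cont S.hw₂bdd
  have hq₁ := BoundedContinuousOn.uncurry S.hq₁cont S.hq₁bdd
  have hq₂ := BoundedContinuousOn.uncurry S.hq₂cont S.hq₂bdd
  have hD := S.integrableOn_slice S.boundedContinuousOn_dissipation ht
  have hA₁ := S.integrableOn_slice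
    (F := fun x t => S.w₁ x t ⬝ᵥ S.gq₁ x t + S.q₁ x t * divOf (S.Jw₁ x t))
    ((hw₁.dotProduct (.uncurry S.hgq₁cont S.hgq₁bdd)).add
      (hq₁.mul (.uncurry (F := fun x s => divOf (S.Jw₁ x s)) S.hdivw₁cont S.hdivw₁bdd))) ht
  have hA₂ := S.integrableOn_slice
    (F := fun x t => S.w₂ x t ⬝ᵥ S.gq₂ x t + S.q₂ x t * divOf (S.Jw₂ x t))
    ((hw₂.dotProduct (.uncurry S.hgq₂cont S.hgq₂bdd)).add
      (hq₂.mul (.uncurry (F := fun x s => divOf (S.Jw₂ x s)) S.hdivw₂cont S.hdivw₂bdd))) ht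
  rw [setIntegral_congr_fun S.hΩopen.measurableSet fun x hx => energyDensityDeriv_eq hx ht,
    integral_neg, integral_add (hD.fun_add hA₁) hA₂, integral_add hD hA₁, S.H1₁ t ht,
    S.H1₂ t ht, add_zero, add_zero]

theorem integral_dissipationDeriv {t : ℝ} (ht : t ∈ Icc (0:ℝ) S.T) :
    ∫ x in S.Ω, S.dissipationDeriv x t =
      -2 * ((∫ x in S.Ω, S.γ / S.φ₁ x * (S.dw₁ x t ⬝ᵥ S.dw₁ x t))
        + ∫ x in S.Ω, S.γ / S.φ₂ x * (S.dw₂ x t ⬝ᵥ S.dw₂ x t)) := by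
  have hdw₁ := BoundedContinuousOn.uncurry S.hdw₁cont S.hdw₁bdd
  have hdw₂ := BoundedContinuousOn.uncurry S.hdw₂cont S.hdw₂bdd
  have hq₁ := BoundedContinuousOn.uncurry S.hq₁cont S.hq₁bdd
  have hq₂ := BoundedContinuousOn.uncurry S.hq₂cont S.hq₂bdd
  have hP₁ := S.integrableOn_slice (F := fun x t => S.γ / S.φ₁ x * (S.dw₁ x t ⬝ᵥ S.dw₁ x t))
    (((S.boundedContinuousOn_div_φ₁ S.γ).comp_fst _).mul (hdw₁.dotProduct hdw₁)) ht
  have hP₂ := S.integrableOn_slice (F := fun x t => S.γ / S.φ₂ x * (S.dw₂ x t ⬝ᵥ S.dw₂ x t))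
    (((S.boundedContinuousOn_div_φ₂ S.γ).comp_fst _).mul (hdw₂.dotProduct hdw₂)) ht
  have hB₁ := S.integrableOn_slice
    (F := fun x t => S.dw₁ x t ⬝ᵥ S.gq₁ x t + S.q₁ x t * divOf (S.Jdw₁ x t))
    ((hdw₁.dotProduct (.uncurry S.hgq₁cont S.hgq₁bdd)).add
      (hq₁.mul (.uncurry (F := fun x s => divOf (S.Jdw₁ x s)) S.hdivdw₁cont S.hdivdw₁bdd))) ht
  have hB₂ := S.integrableOn_slice
    (F := fun x t => S.dw₂ x t ⬝ᵥ S.gq₂ x t + S.q₂ x t * divOf (S.Jdw₂ x t))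
    ((hdw₂.dotProduct (.uncurry S.hgq₂cont S.hgq₂bdd)).add
      (hq₂.mul (.uncurry (F := fun x s => divOf (S.Jdw₂ x s)) S.hdivdw₂cont S.hdivdw₂bdd))) ht
  rw [setIntegral_congr_fun S.hΩopen.measurableSet fun x hx => dissipationDeriv_eq hx ht,
    integral_const_mul, integral_add ((hP₁.fun_add hP₂).fun_add hB₁) hB₂,
    integral_add (hP₁.fun_add hP₂) hB₁, integral_add hP₁ hP₂, S.H2₁ t ht, S.H2₂ t ht,
    add_zero, add_zero]

end DPP

/-- **Second identity of Proposition 3.2**: for the homogeneous DPP difference system,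
for every `t ∈ [0,T]`,
`E″(t) = 2 ∫_Ω (γ/φ₁) |∂w₁/∂t|² dx + 2 ∫_Ω (γ/φ₂) |∂w₂/∂t|² dx`. -/
theorem stmt_3 (S : DPP) :
    ∀ t ∈ Icc (0:ℝ) S.T,
      derivWithin (fun s => derivWithin S.E (Icc (0:ℝ) S.T) s) (Icc (0:ℝ) S.T) t =
        2 * (∫ x in S.Ω, (S.γ / S.φ₁ x) * (S.dw₁ x t ⬝ᵥ S.dw₁ x t))
          + 2 * (∫ x in S.Ω, (S.γ / S.φ₂ x) * (S.dw₂ x t ⬝ᵥ S.dw₂ x t)) := by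
  intro t ht
  have hE' : ∀ s ∈ Icc (0:ℝ) S.T,
      derivWithin S.E (Icc (0:ℝ) S.T) s = -∫ x in S.Ω, S.dissipation x s := fun s hs => by
    have hE : HasDerivWithinAt S.E (∫ x in S.Ω, S.energyDensityDeriv x s) (Icc (0:ℝ) S.T) s :=
      S.hasDerivWithinAt_integral S.boundedContinuousOn_energyDensity
        S.boundedContinuousOn_energyDensityDeriv
        (fun x hx r hr => DPP.hasDerivWithinAt_energyDensity hx hr) hs
    rw [hE.derivWithin (S.uniqueDiffOn s hs), DPP.integral_energyDensityDeriv hs]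
  have hD : HasDerivWithinAt (fun s => ∫ x in S.Ω, S.dissipation x s)
      (∫ x in S.Ω, S.dissipationDeriv x t) (Icc (0:ℝ) S.T) t :=
    S.hasDerivWithinAt_integral S.boundedContinuousOn_dissipation
      S.boundedContinuousOn_dissipationDeriv
      (fun x hx r hr => DPP.hasDerivWithinAt_dissipation hx hr) ht
  rw [derivWithin_congr hE' (hE' t ht), hD.fun_neg.derivWithin (S.uniqueDiffOn t ht),
    DPP.integral_dissipationDeriv ht]
  ring
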